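/- Let Δt ∈ ℝ, let f^n, f^{n+1} be phase-space densities and E^n, E^{n+1} electric fields satisfying the implicit-midpoint Vlasov update pointwise: f^{n+1}(x,v) = f^n(x,v) − Δt( v·∇_x g(x,v) + (1/2)(E^n(x)+E^{n+1}(x))·∇_v g(x,v) ) where g = (f^n + f^{n+1})/2. Then the L² norm is exactly conserved: ∫_{ℝ^d}∫_{ℝ^d} |f^{n+1}(x,v)|² dv dx = ∫_{ℝ^d}∫_{ℝ^d} |f^n(x,v)|² dv dx. -/

import Mathlib

open MeasureTheory
open scoped RealInnerProductSpace

noncomputable section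

/-- Points of `ℝ^d`. -/
abbrev Vec (d : ℕ) := EuclideanSpace ℝ (Fin d)

/-- Gradient of a phase-space function in its first (`x`) argument. -/
def gradx {d : ℕ} (f : Vec d × Vec d → ℝ) (x v : Vec d) : Vec d :=
  gradient (fun y => f (y, v)) x

/-- Gradient of a phase-space function in its second (`v`) argument. -/
def gradv {d : ℕ} (f : Vec d × Vec d → ℝ) (x v : Vec d) : Vec d :=
  gradient (fun w => f (x, w)) v

/-- Charge density `ρ_f(x) = ∫ f(x,v) dv`. -/
def rho {d : ℕ} (f : Vec d × Vec d → ℝ) (x : Vec d) : ℝ :=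
  ∫ v, f (x, v)

/-- Current `J_f(x) = ∫ f(x,v) v dv`. -/
def Jcur {d : ℕ} (f : Vec d × Vec d → ℝ) (x : Vec d) : Vec d :=
  ∫ v, f (x, v) • v

/-- Particle number `N(f)`. -/
def Npart {d : ℕ} (f : Vec d × Vec d → ℝ) : ℝ :=
  ∫ x, ∫ v, f (x, v)

/-- Kinetic energy `K(f) = ∫∫ f(x,v) |v|² dv dx`. -/
def Kin {d : ℕ} (f : Vec d × Vec d → ℝ) : ℝ :=
  ∫ x, ∫ v, f (x, v) * ‖v‖ ^ 2

/-- Electric energy `W(E) = ∫ |E(x)|² dx`. -/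
def Wel {d : ℕ} (E : Vec d → Vec d) : ℝ :=
  ∫ x, ‖E x‖ ^ 2

/-- A phase-space density: smooth and compactly supported. -/
def IsDensity {d : ℕ} (f : Vec d × Vec d → ℝ) : Prop :=
  ContDiff ℝ (⊤ : ℕ∞) f ∧ HasCompactSupport f

/-- An electric field: continuous with finite electric energy. -/
def IsEField {d : ℕ} (E : Vec d → Vec d) : Prop :=
  Continuous E ∧ Integrable (fun x => ‖E x‖ ^ 2)

/-- Divergence in `x` of a vector field on `ℝ^d`. -/
def divg {d : ℕ} (F : Vec d → Vec d) (x : Vec d) : ℝ :=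
  ∑ i : Fin d, fderiv ℝ F x (EuclideanSpace.single i 1) i


/-! ### Auxiliary lemmas -/

section AuxLemmas

variable {d : ℕ}

/-- Integration by parts consequence: for a smooth compactly supported function `h`,
`∫ h x * (Dh x u) = 0`. -/
lemma integral_self_mul_fderiv {h : Vec d → ℝ}
    (hc : ContDiff ℝ (⊤ : ℕ∞) h) (hs : HasCompactSupport h) (u : Vec d) :
    ∫ x, h x * fderiv ℝ h x u = 0 := by
  obtain ⟨C, hC⟩ := hc.lipschitzWith_of_hasCompactSupport hs (by simp)
  have key := hC.integral_lineDeriv_mul_eq (μ := volume) hC hs u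
  have hdiff : ∀ x, DifferentiableAt ℝ h x := fun x => (hc.differentiable (by simp)) x
  have h1 : ∀ x, lineDeriv ℝ h x u = fderiv ℝ h x u := fun x =>
    (hdiff x).lineDeriv_eq_fderiv
  have h2 : ∀ x, lineDeriv ℝ h x (-u) = -(fderiv ℝ h x u) := fun x => by
    rw [(hdiff x).lineDeriv_eq_fderiv, map_neg]
  simp only [h1, h2, neg_mul] at key
  rw [integral_neg] at key
  have : ∫ x, fderiv ℝ h x u * h x = 0 := by linarith
  simpa [mul_comm] using this

lemma inner_gradient_eq {h : Vec d → ℝ} (u x : Vec d) :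
    ⟪u, gradient h x⟫ = fderiv ℝ h x u := by
  rw [gradient, real_inner_comm, InnerProductSpace.toDual_symm_apply]

lemma fderiv_slice_x {f : Vec d × Vec d → ℝ} (hf : ContDiff ℝ (⊤ : ℕ∞) f) (x v u : Vec d) :
    fderiv ℝ (fun y => f (y, v)) x u = fderiv ℝ f (x, v) (u, 0) := by
  have hD : HasFDerivAt (fun y : Vec d => f (y, v))
      ((fderiv ℝ f (x, v)).comp (ContinuousLinearMap.inl ℝ (Vec d) (Vec d))) x :=
    ((hf.differentiable (by simp)) (x, v)).hasFDerivAt.comp x (hasFDerivAt_prodMk_left x v)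
  rw [hD.fderiv]; rfl

lemma fderiv_slice_v {f : Vec d × Vec d → ℝ} (hf : ContDiff ℝ (⊤ : ℕ∞) f) (x v u : Vec d) :
    fderiv ℝ (fun w => f (x, w)) v u = fderiv ℝ f (x, v) (0, u) := by
  have hD : HasFDerivAt (fun w : Vec d => f (x, w))
      ((fderiv ℝ f (x, v)).comp (ContinuousLinearMap.inr ℝ (Vec d) (Vec d))) v :=
    ((hf.differentiable (by simp)) (x, v)).hasFDerivAt.comp v (hasFDerivAt_prodMk_right x v)
  rw [hD.fderiv]; rfl

lemma inner_gradx_eq {f : Vec d × Vec d → ℝ} (hf : ContDiff ℝ (⊤ : ℕ∞) f) (x v u : Vec d) :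
    ⟪u, gradx f x v⟫ = fderiv ℝ f (x, v) (u, 0) := by
  rw [gradx, inner_gradient_eq, fderiv_slice_x hf]

lemma inner_gradv_eq {f : Vec d × Vec d → ℝ} (hf : ContDiff ℝ (⊤ : ℕ∞) f) (x v u : Vec d) :
    ⟪u, gradv f x v⟫ = fderiv ℝ f (x, v) (0, u) := by
  rw [gradv, inner_gradient_eq, fderiv_slice_v hf]

lemma slice_x_contDiff {f : Vec d × Vec d → ℝ} (hf : ContDiff ℝ (⊤ : ℕ∞) f) (v : Vec d) :
    ContDiff ℝ (⊤ : ℕ∞) (fun y => f (y, v)) :=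
  hf.comp (contDiff_id.prodMk contDiff_const)

lemma slice_v_contDiff {f : Vec d × Vec d → ℝ} (hf : ContDiff ℝ (⊤ : ℕ∞) f) (x : Vec d) :
    ContDiff ℝ (⊤ : ℕ∞) (fun w => f (x, w)) :=
  hf.comp (contDiff_const.prodMk contDiff_id)

lemma slice_x_compSupp {f : Vec d × Vec d → ℝ} (hf : HasCompactSupport f) (v : Vec d) :
    HasCompactSupport (fun y => f (y, v)) := by
  apply HasCompactSupport.intro (hf.image continuous_fst)
  intro y hy
  by_contra h
  exact hy ⟨(y, v), subset_tsupport f h, rfl⟩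

lemma slice_v_compSupp {f : Vec d × Vec d → ℝ} (hf : HasCompactSupport f) (x : Vec d) :
    HasCompactSupport (fun w => f (x, w)) := by
  apply HasCompactSupport.intro (hf.image continuous_snd)
  intro w hw
  by_contra h
  exact hw ⟨(x, w), subset_tsupport f h, rfl⟩

lemma slice_x_integral {g : Vec d × Vec d → ℝ} (hgc : ContDiff ℝ (⊤ : ℕ∞) g)
    (hgs : HasCompactSupport g) (v u : Vec d) :
    ∫ x, g (x, v) * fderiv ℝ g (x, v) (u, 0) = 0 := by
  have h := integral_self_mul_fderiv (slice_x_contDiff hgc v) (slice_x_compSupp hgs v) u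
  calc ∫ x, g (x, v) * fderiv ℝ g (x, v) (u, 0)
      = ∫ x, (fun y => g (y, v)) x * fderiv ℝ (fun y => g (y, v)) x u := by
        congr 1; funext x; rw [fderiv_slice_x hgc]
    _ = 0 := h

lemma slice_v_integral {g : Vec d × Vec d → ℝ} (hgc : ContDiff ℝ (⊤ : ℕ∞) g)
    (hgs : HasCompactSupport g) (x u : Vec d) :
    ∫ v, g (x, v) * fderiv ℝ g (x, v) (0, u) = 0 := by
  have h := integral_self_mul_fderiv (slice_v_contDiff hgc x) (slice_v_compSupp hgs x) u
  calc ∫ v, g (x, v) * fderiv ℝ g (x, v) (0, u)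
      = ∫ v, (fun w => g (x, w)) v * fderiv ℝ (fun w => g (x, w)) v u := by
        congr 1; funext v; rw [fderiv_slice_v hgc]
    _ = 0 := h

end AuxLemmas

/-- exact L² conservation for the implicit midpoint Vlasov update. -/
theorem scheme2_L2_conservation
    {d : ℕ} (hd : 1 ≤ d) (Δt : ℝ)
    (fn fn1 : Vec d × Vec d → ℝ) (En En1 : Vec d → Vec d)
    (hfn : IsDensity fn) (hfn1 : IsDensity fn1)
    (hEn : Continuous En) (hEn1 : Continuous En1)
    (h1 : ∀ x v : Vec d, fn1 (x, v) =
      fn (x, v) - Δt * (⟪v, gradx (fun p => (fn p + fn1 p) / 2) x v⟫ +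
        (1 / 2) * ⟪En x + En1 x, gradv (fun p => (fn p + fn1 p) / 2) x v⟫)) :
    (∫ x, ∫ v, (fn1 (x, v)) ^ 2) = ∫ x, ∫ v, (fn (x, v)) ^ 2 := by
  classical
  set g : Vec d × Vec d → ℝ := fun p => (fn p + fn1 p) / 2 with hgdef
  have hgc : ContDiff ℝ (⊤ : ℕ∞) g := (hfn.1.add hfn1.1).div_const 2
  have hgs : HasCompactSupport g := by
    have h := hfn.2.add hfn1.2
    exact h.comp_left (g := fun r : ℝ => r / 2) (by simp)
  set c : Vec d → Vec d := fun x => En x + En1 x with hcdef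
  have hcc : Continuous c := hEn.add hEn1
  -- pointwise identity
  have hpt : ∀ x v : Vec d, fn1 (x, v) ^ 2 - fn (x, v) ^ 2 =
      (-2 * Δt) * (g (x, v) * fderiv ℝ g (x, v) (v, 0)) +
        (-Δt) * (g (x, v) * fderiv ℝ g (x, v) (0, c x)) := by
    intro x v
    have h := h1 x v
    rw [inner_gradx_eq hgc, inner_gradv_eq hgc] at h
    have hsum : g (x, v) = (fn (x, v) + fn1 (x, v)) / 2 := rfl
    rw [hsum, h]
    ring
  -- integrability facts
  have hDgcont : Continuous (fderiv ℝ g) := hgc.continuous_fderiv (by simp)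
  have hψ1cont : Continuous (fun p : Vec d × Vec d => g p * fderiv ℝ g p (p.2, 0)) :=
    hgc.continuous.mul (hDgcont.clm_apply (continuous_snd.prodMk continuous_const))
  have hψ2cont : Continuous (fun p : Vec d × Vec d => g p * fderiv ℝ g p (0, c p.1)) :=
    hgc.continuous.mul (hDgcont.clm_apply (continuous_const.prodMk (hcc.comp continuous_fst)))
  have hψ1supp : HasCompactSupport (fun p : Vec d × Vec d => g p * fderiv ℝ g p (p.2, 0)) :=
    hgs.mul_right
  have hψ2supp : HasCompactSupport (fun p : Vec d × Vec d => g p * fderiv ℝ g p (0, c p.1)) :=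
    hgs.mul_right
  have hI1 : Integrable (fun p : Vec d × Vec d => g p * fderiv ℝ g p (p.2, 0)) :=
    hψ1cont.integrable_of_hasCompactSupport hψ1supp
  have hI2 : Integrable (fun p : Vec d × Vec d => g p * fderiv ℝ g p (0, c p.1)) :=
    hψ2cont.integrable_of_hasCompactSupport hψ2supp
  have hIfn : Integrable (fun p : Vec d × Vec d => fn p ^ 2) :=
    (hfn.1.continuous.pow 2).integrable_of_hasCompactSupport
      (hfn.2.comp_left (g := fun r : ℝ => r ^ 2) (by simp) :
        HasCompactSupport (fun p : Vec d × Vec d => fn p ^ 2))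
  have hIfn1 : Integrable (fun p : Vec d × Vec d => fn1 p ^ 2) :=
    (hfn1.1.continuous.pow 2).integrable_of_hasCompactSupport
      (hfn1.2.comp_left (g := fun r : ℝ => r ^ 2) (by simp) :
        HasCompactSupport (fun p : Vec d × Vec d => fn1 p ^ 2))
  -- the two transport terms vanish
  have key1 : (∫ p : Vec d × Vec d, g p * fderiv ℝ g p (p.2, 0)) = 0 := by
    rw [MeasureTheory.Measure.volume_eq_prod]
    rw [MeasureTheory.integral_prod_symm _ (MeasureTheory.Measure.volume_eq_prod (Vec d) (Vec d) ▸ hI1)]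
    have hz : ∀ v : Vec d, (∫ x, g (x, v) * fderiv ℝ g (x, v) (v, 0)) = 0 := fun v =>
      slice_x_integral hgc hgs v v
    simp only [hz, integral_zero]
  have key2 : (∫ p : Vec d × Vec d, g p * fderiv ℝ g p (0, c p.1)) = 0 := by
    rw [MeasureTheory.Measure.volume_eq_prod]
    rw [MeasureTheory.integral_prod _ (MeasureTheory.Measure.volume_eq_prod (Vec d) (Vec d) ▸ hI2)]
    have hz : ∀ x : Vec d, (∫ v, g (x, v) * fderiv ℝ g (x, v) (0, c x)) = 0 := fun x =>
      slice_v_integral hgc hgs x (c x)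
    simp only [hz, integral_zero]
  -- difference integral vanishes
  have hfun : (fun p : Vec d × Vec d => fn1 p ^ 2 - fn p ^ 2) =
      fun p : Vec d × Vec d => (-2 * Δt) * (g p * fderiv ℝ g p (p.2, 0)) +
        (-Δt) * (g p * fderiv ℝ g p (0, c p.1)) := by
    funext p
    have := hpt p.1 p.2
    simpa using this
  have hsub : (∫ p : Vec d × Vec d, (fn1 p ^ 2 - fn p ^ 2)) = 0 := by
    rw [hfun, integral_add (hI1.const_mul _) (hI2.const_mul _),
      integral_const_mul, integral_const_mul, key1, key2]
    ring
  have hEq : (∫ p : Vec d × Vec d, fn1 p ^ 2) = ∫ p : Vec d × Vec d, fn p ^ 2 := by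
    have h := integral_sub hIfn1 hIfn
    rw [hsub] at h
    linarith [h.symm]
  have e1 : (∫ p : Vec d × Vec d, fn1 p ^ 2) = ∫ x, ∫ v, fn1 (x, v) ^ 2 := by
    rw [MeasureTheory.Measure.volume_eq_prod]
    exact MeasureTheory.integral_prod _ (MeasureTheory.Measure.volume_eq_prod (Vec d) (Vec d) ▸ hIfn1)
  have e2 : (∫ p : Vec d × Vec d, fn p ^ 2) = ∫ x, ∫ v, fn (x, v) ^ 2 := by
    rw [MeasureTheory.Measure.volume_eq_prod]
    exact MeasureTheory.integral_prod _ (MeasureTheory.Measure.volume_eq_prod (Vec d) (Vec d) ▸ hIfn)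
  rw [← e1, ← e2]
  exact hEq
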